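/- arXiv:1505.02803 — 2 statements merged into one kernel-verified Lean document; each statement's English description precedes it below -/
import Mathlib

section
/- Let 0 < α ≤ 1 and λ ≥ 0. For every t > 0, the function t ↦ E_{α,1}(-λ t^α) is differentiable at t with derivative -λ t^{α-1} E_{α,α}(-λ t^α). -/
/-!
Termwise differentiation of the series of `E_{α,1}` is justified by the ratio test: log-convexity
of `Γ` gives `Γ(x + 1) ≤ Γ(x + α) (x + α)^(1 - α)`, hence `Γ(x) / Γ(x + α) → 0`, so every series
`∑ zᵏ / Γ(α k + b)` converges. Since `Γ(α k + α + 1) = α (k + 1) Γ(α k + α)`, the differentiated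
series is `E_{α,α} / α`, and the chain rule with `d/dt (-λ t^α) = -λ α t^(α-1)` concludes.
-/

open MeasureTheory Real Set

/-- The two-parameter Mittag-Leffler function `E_{a,b}(z) = ∑ₖ zᵏ / Γ(a k + b)`. -/
noncomputable def mittagLeffler (a b z : ℝ) : ℝ :=
  ∑' k : ℕ, z ^ k / Real.Gamma (a * k + b)

open Filter Topology

theorem Real.Gamma_add_one_le_Gamma_add_mul_rpow {α x : ℝ} (hα : 0 < α) (hα1 : α ≤ 1)
    (hx : 0 < x + α) : Gamma (x + 1) ≤ Gamma (x + α) * (x + α) ^ (1 - α) := by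
  rcases hα1.eq_or_lt with rfl | hα1
  · simp
  have hΓ : 0 < Gamma (x + α) := Gamma_pos_of_pos hx
  have hHolder := Gamma_mul_add_mul_le_rpow_Gamma_mul_rpow_Gamma (s := x + α) (t := x + α + 1)
    hx (by linarith) hα (by linarith) (add_sub_cancel α 1)
  calc Gamma (x + 1) = Gamma (α * (x + α) + (1 - α) * (x + α + 1)) := by ring_nf
    _ ≤ Gamma (x + α) ^ α * Gamma (x + α + 1) ^ (1 - α) := hHolder
    _ = Gamma (x + α) * (x + α) ^ (1 - α) := by
      rw [Gamma_add_one hx.ne', mul_rpow hx.le hΓ.le, mul_left_comm, ← rpow_add hΓ,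
        add_sub_cancel, rpow_one, mul_comm]

theorem Real.tendsto_Gamma_div_Gamma_add_atTop {α : ℝ} (hα : 0 < α) (hα1 : α ≤ 1) :
    Tendsto (fun x => Gamma x / Gamma (x + α)) atTop (𝓝 0) := by
  have hbound : ∀ x, α ≤ x → Gamma x / Gamma (x + α) ≤ 2 * (x + α) ^ (-α) := by
    intro x hx
    have hx0 : 0 < x := hα.trans_le hx
    have hxα : 0 < x + α := by linarith
    rw [div_le_iff₀ (Gamma_pos_of_pos hxα), ← mul_le_mul_iff_of_pos_left hx0,
      ← Gamma_add_one hx0.ne']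
    calc Gamma (x + 1) ≤ Gamma (x + α) * (x + α) ^ (1 - α) :=
          Gamma_add_one_le_Gamma_add_mul_rpow hα hα1 hxα
      _ = (x + α) * ((x + α) ^ (-α) * Gamma (x + α)) := by
          rw [show 1 - α = -α + 1 by ring, rpow_add_one hxα.ne']; ring
      _ ≤ (2 * x) * ((x + α) ^ (-α) * Gamma (x + α)) := by
          gcongr
          linarith
      _ = x * (2 * (x + α) ^ (-α) * Gamma (x + α)) := by ring
  have hlim : Tendsto (fun x => 2 * (x + α) ^ (-α)) atTop (𝓝 0) := by
    simpa using ((tendsto_rpow_neg_atTop hα).comp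
      (tendsto_atTop_add_const_right _ α tendsto_id)).const_mul 2
  refine squeeze_zero' ?_ ?_ hlim
  · filter_upwards [eventually_gt_atTop 0] with x hx
    exact div_nonneg (Gamma_pos_of_pos hx).le (Gamma_pos_of_pos (by linarith)).le
  · filter_upwards [eventually_ge_atTop α] with x hx using hbound x hx

theorem summable_pow_div_Gamma {α b : ℝ} (hα : 0 < α) (hα1 : α ≤ 1) (hb : 0 < b) (z : ℝ) :
    Summable fun k : ℕ => z ^ k / Gamma (α * k + b) := by
  have hx : Tendsto (fun k : ℕ => α * k + b) atTop atTop :=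
    tendsto_atTop_add_const_right _ b (tendsto_natCast_atTop_atTop.const_mul_atTop hα)
  have hratio : ∀ᶠ k : ℕ in atTop,
      |z| * (Gamma (α * k + b) / Gamma (α * k + b + α)) ≤ 1 / 2 :=
    (((tendsto_Gamma_div_Gamma_add_atTop hα hα1).comp hx).const_mul |z|).eventually_le_const
      (by simp)
  refine summable_of_ratio_norm_eventually_le (r := 1 / 2) (by norm_num) ?_
  filter_upwards [hratio] with k hk
  have hΓ : 0 < Gamma (α * k + b) := Gamma_pos_of_pos (by positivity)
  have hΓα : 0 < Gamma (α * k + b + α) := Gamma_pos_of_pos (by positivity)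
  calc ‖z ^ (k + 1) / Gamma (α * ↑(k + 1) + b)‖
      = |z| * (Gamma (α * k + b) / Gamma (α * k + b + α)) * (|z| ^ k / Gamma (α * k + b)) := by
        rw [show α * ↑(k + 1) + b = α * k + b + α by push_cast; ring, norm_div, norm_pow,
          Real.norm_eq_abs, Real.norm_eq_abs, abs_of_pos hΓα]
        field_simp
        ring
    _ ≤ 1 / 2 * ‖z ^ k / Gamma (α * k + b)‖ := by
        rw [norm_div, norm_pow, Real.norm_eq_abs, Real.norm_eq_abs, abs_of_pos hΓ]
        gcongr

theorem hasDerivAt_tsum_mul_pow {c : ℕ → ℝ} (hc : ∀ z, Summable fun k => c k * z ^ k) (z : ℝ) :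
    HasDerivAt (fun z => ∑' k, c k * z ^ k) (∑' k : ℕ, (k + 1) * c (k + 1) * z ^ k) z := by
  set R := |z| + 1
  have hz : z ∈ Ioo (-R) R := by
    constructor <;> linarith [neg_abs_le z, le_abs_self z]
  have hbound :
      ∀ (k : ℕ) y, y ∈ Ioo (-R) R → ‖c k * (k * y ^ (k - 1))‖ ≤ |c k * (2 * R) ^ k| := by
    intro k y hy
    have hyR : |y| ≤ R := abs_le.2 ⟨hy.1.le, hy.2.le⟩
    have hR : 1 ≤ R := le_add_of_nonneg_left (abs_nonneg z)
    have hk : (k : ℝ) ≤ 2 ^ k := by exact_mod_cast Nat.lt_two_pow_self.le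
    have hpow : |y| ^ (k - 1) ≤ R ^ k :=
      (pow_le_pow_left₀ (abs_nonneg y) hyR _).trans (pow_le_pow_right₀ hR (Nat.sub_le k 1))
    rw [norm_mul, norm_mul, norm_pow, Real.norm_eq_abs, Real.norm_eq_abs, Real.norm_eq_abs,
      Nat.abs_cast, abs_mul, abs_pow, abs_of_pos (by positivity : (0 : ℝ) < 2 * R), mul_pow]
    gcongr
  have hderiv := hasDerivAt_tsum_of_isPreconnected (hc (2 * R)).abs isOpen_Ioo
    (convex_Ioo _ _).isPreconnected (fun k y _ => (hasDerivAt_pow k y).const_mul (c k)) hbound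
    hz (hc z) hz
  have hsum : Summable fun k : ℕ => c k * (k * z ^ (k - 1)) :=
    .of_norm_bounded (hc (2 * R)).abs fun k => hbound k z hz
  refine hderiv.congr_deriv ?_
  rw [hsum.tsum_eq_zero_add]
  simp only [Nat.cast_zero, zero_mul, mul_zero, zero_add, Nat.cast_add, Nat.cast_one,
    Nat.add_sub_cancel]
  exact tsum_congr fun k => by ring

theorem hasDerivAt_mittagLeffler_one {α : ℝ} (hα : 0 < α) (hα1 : α ≤ 1) (z : ℝ) :
    HasDerivAt (mittagLeffler α 1) (mittagLeffler α α z / α) z := by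
  have hML : mittagLeffler α 1 = fun z => ∑' k : ℕ, (Gamma (α * k + 1))⁻¹ * z ^ k := by
    funext z
    exact tsum_congr fun k => div_eq_inv_mul _ _
  have hcoeff (k : ℕ) : ((k : ℝ) + 1) * (Gamma (α * ↑(k + 1) + 1))⁻¹ * z ^ k
      = z ^ k / Gamma (α * k + α) / α := by
    have hαk : α * ↑(k + 1) = α * k + α := by push_cast; ring
    rw [hαk, Gamma_add_one (by positivity)]
    field_simp
  have hsum (z : ℝ) : Summable fun k : ℕ => (Gamma (α * k + 1))⁻¹ * z ^ k := by
    simpa only [div_eq_inv_mul] using summable_pow_div_Gamma hα hα1 one_pos z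
  rw [hML]
  refine (hasDerivAt_tsum_mul_pow hsum z).congr_deriv ?_
  rw [mittagLeffler, ← tsum_div_const]
  exact tsum_congr hcoeff

theorem hasDerivAt_mittagLeffler_alpha_one_general
    (α lam : ℝ) (hα : 0 < α) (hα1 : α ≤ 1) (t : ℝ) (ht : 0 < t) :
    HasDerivAt (fun τ : ℝ => mittagLeffler α 1 (-(lam * τ ^ α)))
      (-(lam * t ^ (α - 1) * mittagLeffler α α (-(lam * t ^ α)))) t := by
  have hinner : HasDerivAt (fun τ : ℝ => -(lam * τ ^ α)) (-(lam * (α * t ^ (α - 1)))) t :=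
    ((hasDerivAt_rpow_const (Or.inl ht.ne')).const_mul lam).neg
  refine ((hasDerivAt_mittagLeffler_one hα hα1 _).comp t hinner).congr_deriv ?_
  field_simp

theorem hasDerivAt_mittagLeffler_alpha_one
    (α lam : ℝ) (hα : 0 < α) (hα1 : α ≤ 1) (hlam : 0 ≤ lam) (t : ℝ) (ht : 0 < t) :
    HasDerivAt (fun τ : ℝ => mittagLeffler α 1 (-(lam * τ ^ α)))
      (-(lam * t ^ (α - 1) * mittagLeffler α α (-(lam * t ^ α)))) t :=
  hasDerivAt_mittagLeffler_alpha_one_general α lam hα hα1 t ht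
end

section
/- Let 0 < α < 1 and λ ≥ 0. For every t > 0, the function H(t) = (1/Γ(1-α)) ∫_0^t (t-s)^{-α} (E_{α,1}(-λ s^α) - 1) ds is differentiable at t, and its derivative equals -λ E_{α,1}(-λ t^α). (In other words, w(t) = E_{α,1}(-λ t^α) satisfies the time-fractional equation ∂_t^α(w - w(0)) + λ w = 0, where ∂_t^α f = d/dt (g_{1-α} ∗ f) is the Riemann–Liouville fractional derivative; this is the Fourier-space form of the fully nonlocal diffusion equation solved by the fundamental solution Z.) -/
open MeasureTheory Real Set

/-!
Integrating the series of `E_{α,1}(c s^α)` term by term against `(τ - s)^(μ-1)`, each power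
`s^(αk)` gives a Beta integral, and the result is the Riemann–Liouville identity
`∫₀^τ (τ - s)^(μ-1) E_{α,1}(c s^α) ds = Γ(μ) τ^μ E_{α,μ+1}(c τ^α)`.
Taken with `μ = 1 - α` (after removing the constant term `1 = E_{α,1}(0)`) and with `μ = 1`,
it shows that `H(τ)` and `∫₀^τ -λ E_{α,1}(-λ r^α) dr` both equal `-λ τ E_{α,2}(-λ τ^α)`,
so the derivative is given by the fundamental theorem of calculus.
The termwise integration needs `E_{a,b}` to be entire, which follows from the ratio test
once `Γ(y + a) / Γ(y) → ∞`; for `a < 1` this is Wendel's inequality, a consequence of the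
log-convexity of `Γ`.
-/

open Filter

namespace Real

/-- Log-convexity at `y + 1 = a (y + a) + (1 - a) (y + a + 1)`. -/
theorem mul_Gamma_le_rpow_mul_Gamma_add {y a : ℝ} (hy : 0 < y) (ha : 0 < a) (ha1 : a < 1) :
    y * Gamma y ≤ (y + a) ^ (1 - a) * Gamma (y + a) := by
  have hconv := Gamma_mul_add_mul_le_rpow_Gamma_mul_rpow_Gamma (s := y + a) (t := y + a + 1)
    (by positivity) (by positivity) ha (sub_pos.mpr ha1) (add_sub_cancel a 1)
  have hΓ : 0 < Gamma (y + a) := Gamma_pos_of_pos (by positivity)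
  rw [show a * (y + a) + (1 - a) * (y + a + 1) = y + 1 by ring, Gamma_add_one hy.ne',
    Gamma_add_one (by positivity), mul_rpow (by positivity) hΓ.le] at hconv
  calc y * Gamma y ≤ Gamma (y + a) ^ a * ((y + a) ^ (1 - a) * Gamma (y + a) ^ (1 - a)) := hconv
    _ = (y + a) ^ (1 - a) * Gamma (y + a) := by
      rw [mul_left_comm, ← rpow_add hΓ, add_sub_cancel, rpow_one]

theorem tendsto_Gamma_add_div_Gamma_atTop {a : ℝ} (ha : 0 < a) :
    Tendsto (fun y => Gamma (y + a) / Gamma y) atTop atTop := by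
  rcases lt_or_ge a 1 with ha1 | ha1
  · refine tendsto_atTop_mono' _ ?_ ((tendsto_rpow_atTop ha).atTop_div_const two_pos)
    filter_upwards [eventually_ge_atTop a] with y hy
    have hy0 : 0 < y := ha.trans_le hy
    have hpow : (y + a) ^ (1 - a) ≤ 2 * y ^ (1 - a) :=
      calc (y + a) ^ (1 - a) ≤ (2 * y) ^ (1 - a) := by gcongr; linarith
        _ = 2 ^ (1 - a) * y ^ (1 - a) := mul_rpow zero_le_two hy0.le
        _ ≤ 2 * y ^ (1 - a) := by
          gcongr
          exact rpow_le_self_of_one_le one_le_two (by linarith)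
    have hwendel := (mul_Gamma_le_rpow_mul_Gamma_add hy0 ha ha1).trans
      (mul_le_mul_of_nonneg_right hpow (Gamma_pos_of_pos (by positivity)).le)
    rw [le_div_iff₀ (Gamma_pos_of_pos hy0), div_mul_eq_mul_div, div_le_iff₀ two_pos]
    refine le_of_mul_le_mul_left ?_ (rpow_pos_of_pos hy0 (1 - a))
    calc y ^ (1 - a) * (y ^ a * Gamma y) = y * Gamma y := by
          rw [← mul_assoc, ← rpow_add hy0, sub_add_cancel, rpow_one]
      _ ≤ 2 * y ^ (1 - a) * Gamma (y + a) := hwendel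
      _ = y ^ (1 - a) * (Gamma (y + a) * 2) := by ring
  · refine tendsto_atTop_mono' _ ?_ tendsto_id
    filter_upwards [eventually_ge_atTop 2] with y hy
    have hy0 : 0 < y := by linarith
    rw [id, le_div_iff₀ (Gamma_pos_of_pos hy0), ← Gamma_add_one hy0.ne']
    exact Gamma_strictMonoOn_Ici.monotoneOn (by simp; linarith) (by simp; linarith) (by linarith)

end Real

noncomputable def mittagLefflerSeries (a b : ℝ) : FormalMultilinearSeries ℝ ℝ ℝ :=
  .ofScalars ℝ fun k => (Gamma (a * k + b))⁻¹

section
variable {a b : ℝ}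

theorem mittagLefflerSeries_radius (ha : 0 < a) (hb : 0 < b) :
    (mittagLefflerSeries a b).radius = ⊤ := by
  have hΓ (k : ℕ) : 0 < Gamma (a * k + b) := Gamma_pos_of_pos (by positivity)
  refine FormalMultilinearSeries.ofScalars_radius_eq_top_of_tendsto ℝ _
    (Eventually.of_forall fun k => inv_ne_zero (hΓ k).ne') ?_
  have hlin : Tendsto (fun k : ℕ => a * k + b) atTop atTop :=
    tendsto_atTop_add_const_right _ b (tendsto_natCast_atTop_atTop.const_mul_atTop ha)
  refine ((tendsto_Gamma_add_div_Gamma_atTop ha).comp hlin).inv_tendsto_atTop.congr fun k => ?_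
  rw [Pi.inv_apply, Function.comp_apply, inv_div, norm_inv, norm_inv,
    norm_of_nonneg (hΓ _).le, norm_of_nonneg (hΓ _).le, inv_div_inv, Nat.cast_succ, mul_add_one,
    add_right_comm]

theorem mittagLeffler_eq_sum : mittagLeffler a b = (mittagLefflerSeries a b).sum := by
  funext z
  simp [mittagLeffler, mittagLefflerSeries, FormalMultilinearSeries.sum, div_eq_mul_inv]

theorem summable_mittagLeffler (ha : 0 < a) (hb : 0 < b) (z : ℝ) :
    Summable fun k : ℕ => z ^ k / Gamma (a * k + b) := by
  have := (mittagLefflerSeries a b).summable (x := z) (by simp [mittagLefflerSeries_radius ha hb])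
  simpa [mittagLefflerSeries, FormalMultilinearSeries.ofScalars_apply_eq, div_eq_mul_inv]

theorem continuous_mittagLeffler (ha : 0 < a) (hb : 0 < b) : Continuous (mittagLeffler a b) := by
  have := (mittagLefflerSeries a b).continuousOn
  rw [mittagLefflerSeries_radius ha hb, Metric.eball_top, continuousOn_univ] at this
  rwa [mittagLeffler_eq_sum]

end

theorem mittagLeffler_zero (a b : ℝ) : mittagLeffler a b 0 = (Gamma b)⁻¹ := by
  rw [mittagLeffler, tsum_eq_single 0 fun k hk => by simp [hk]]
  simp

theorem mittagLeffler_eq_inv_Gamma_add_mul {a b : ℝ} (ha : 0 < a) (hb : 0 < b) (z : ℝ) :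
    mittagLeffler a b z = (Gamma b)⁻¹ + z * mittagLeffler a (a + b) z := by
  rw [mittagLeffler, (summable_mittagLeffler ha hb z).tsum_eq_zero_add, mittagLeffler,
    ← tsum_mul_left]
  congr 1
  · simp
  · refine tsum_congr fun k => ?_
    rw [pow_succ', mul_div_assoc]
    congr 3
    push_cast
    ring

theorem integral_mul_tsum_of_norm_le {X : Type*} [MeasurableSpace X] {μ : Measure X}
    {K : X → ℝ} {f : ℕ → X → ℝ} {M : ℕ → ℝ} (hK : Integrable K μ)
    (hf : ∀ k, AEStronglyMeasurable (f k) μ) (hfM : ∀ k, ∀ᵐ x ∂μ, ‖f k x‖ ≤ M k)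
    (hM : Summable M) :
    ∫ x, K x * ∑' k, f k x ∂μ = ∑' k, ∫ x, K x * f k x ∂μ := by
  have hint (k : ℕ) : Integrable (fun x => K x * f k x) μ := hK.mul_bdd (hf k) (hfM k)
  have hnorm (k : ℕ) : ∫ x, ‖K x * f k x‖ ∂μ ≤ M k * ∫ x, ‖K x‖ ∂μ := by
    rw [← integral_const_mul]
    refine integral_mono_ae (hint k).norm (hK.norm.const_mul _) ?_
    filter_upwards [hfM k] with x hx
    rw [norm_mul, mul_comm (M k)]
    exact mul_le_mul_of_nonneg_left hx (norm_nonneg _)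
  simp_rw [← tsum_mul_left]
  refine (integral_tsum_of_summable_integral_norm hint ?_).symm
  exact (hM.mul_right _).of_nonneg_of_le (fun k => integral_nonneg fun _ => norm_nonneg _) hnorm

theorem intervalIntegrable_sub_rpow {r : ℝ} (hr : -1 < r) (τ a b : ℝ) :
    IntervalIntegrable (fun s => (τ - s) ^ r) volume a b := by
  simpa using
    (intervalIntegral.intervalIntegrable_rpow' hr (a := τ - a) (b := τ - b)).comp_sub_left τ

theorem integral_rpow_mul_sub_rpow {u v τ : ℝ} (hu : 0 < u) (hv : 0 < v) (hτ : 0 < τ) :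
    ∫ s in 0..τ, s ^ (u - 1) * (τ - s) ^ (v - 1) =
      τ ^ (u + v - 1) * (Gamma u * Gamma v / Gamma (u + v)) := by
  have hbeta : Complex.betaIntegral u v = ((Gamma u * Gamma v / Gamma (u + v) : ℝ) : ℂ) := by
    have hΓ : ((Gamma (u + v) : ℝ) : ℂ) ≠ 0 := by
      exact_mod_cast (Gamma_pos_of_pos (add_pos hu hv)).ne'
    rw [Complex.ofReal_div, eq_div_iff hΓ, mul_comm, Complex.ofReal_mul, ← Complex.Gamma_ofReal,
      ← Complex.Gamma_ofReal, ← Complex.Gamma_ofReal, Complex.ofReal_add,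
      Complex.Gamma_mul_Gamma_eq_betaIntegral (by simpa) (by simpa)]
  have hcast : ∫ s in 0..τ, ((s ^ (u - 1) * (τ - s) ^ (v - 1) : ℝ) : ℂ) =
      ∫ s in 0..τ, (s : ℂ) ^ ((u : ℂ) - 1) * ((τ : ℂ) - s) ^ ((v : ℂ) - 1) := by
    refine intervalIntegral.integral_congr fun s hs => ?_
    rw [uIcc_of_le hτ.le] at hs
    push_cast [Complex.ofReal_cpow hs.1, Complex.ofReal_cpow (sub_nonneg.mpr hs.2)]
    rfl
  apply Complex.ofReal_injective
  rw [← intervalIntegral.integral_ofReal, hcast, Complex.betaIntegral_scaled _ _ hτ, hbeta,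
    Complex.ofReal_mul, Complex.ofReal_cpow hτ.le]
  push_cast
  rfl

theorem integral_sub_rpow_mul_mul_rpow_pow {α μ τ : ℝ} (hα : 0 ≤ α) (hμ : 0 < μ) (hτ : 0 < τ)
    (c : ℝ) (k : ℕ) :
    ∫ s in 0..τ, (τ - s) ^ (μ - 1) * (c * s ^ α) ^ k =
      Gamma μ * Gamma (α * k + 1) / Gamma (α * k + 1 + μ) * τ ^ μ * (c * τ ^ α) ^ k := by
  have hpow {s : ℝ} (hs : 0 ≤ s) : (c * s ^ α) ^ k = c ^ k * s ^ (α * k + 1 - 1) := by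
    rw [mul_pow, ← rpow_mul_natCast hs, add_sub_cancel_right]
  calc ∫ s in 0..τ, (τ - s) ^ (μ - 1) * (c * s ^ α) ^ k
      = c ^ k * ∫ s in 0..τ, s ^ (α * k + 1 - 1) * (τ - s) ^ (μ - 1) := by
        rw [← intervalIntegral.integral_const_mul]
        refine intervalIntegral.integral_congr fun s hs => ?_
        rw [uIcc_of_le hτ.le] at hs
        rw [hpow hs.1]
        ring
    _ = c ^ k * (τ ^ (α * k + μ) * (Gamma (α * k + 1) * Gamma μ / Gamma (α * k + 1 + μ))) := by
        rw [integral_rpow_mul_sub_rpow (by positivity) hμ hτ, add_sub_right_comm,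
          add_sub_cancel_right]
    _ = _ := by
        rw [hpow hτ.le, add_sub_cancel_right, rpow_add hτ]
        ring

theorem integral_sub_rpow_mul_mittagLeffler {α μ τ : ℝ} (hα : 0 < α) (hμ : 0 < μ) (hτ : 0 < τ)
    (c : ℝ) :
    ∫ s in 0..τ, (τ - s) ^ (μ - 1) * mittagLeffler α 1 (c * s ^ α) =
      Gamma μ * τ ^ μ * mittagLeffler α (μ + 1) (c * τ ^ α) := by
  have hΓ (k : ℕ) : 0 < Gamma (α * k + 1) := Gamma_pos_of_pos (by positivity)
  have hK : IntegrableOn (fun s => (τ - s) ^ (μ - 1)) (Ioc 0 τ) :=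
    (intervalIntegrable_iff_integrableOn_Ioc_of_le hτ.le).mp
      (intervalIntegrable_sub_rpow (by linarith) τ 0 τ)
  have hmeas (k : ℕ) : AEStronglyMeasurable
      (fun s => (c * s ^ α) ^ k / Gamma (α * k + 1)) (volume.restrict (Ioc 0 τ)) :=
    (((continuous_const.mul (continuous_rpow_const hα.le)).pow k).div_const _).aestronglyMeasurable
  have hbound (k : ℕ) : ∀ᵐ s ∂volume.restrict (Ioc 0 τ),
      ‖(c * s ^ α) ^ k / Gamma (α * k + 1)‖ ≤ (|c| * τ ^ α) ^ k / Gamma (α * k + 1) := by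
    refine ae_restrict_of_forall_mem measurableSet_Ioc fun s hs => ?_
    rw [norm_div, norm_pow, norm_mul, norm_of_nonneg (rpow_nonneg hs.1.le α),
      norm_of_nonneg (hΓ k).le, norm_eq_abs]
    have hs0 : 0 ≤ s := hs.1.le
    gcongr
    exact hs.2
  simp only [intervalIntegral.integral_of_le hτ.le, mittagLeffler]
  rw [integral_mul_tsum_of_norm_le hK hmeas hbound (summable_mittagLeffler hα one_pos _),
    ← tsum_mul_left]
  refine tsum_congr fun k => ?_
  simp only [mul_div_assoc', integral_div]
  rw [← intervalIntegral.integral_of_le hτ.le, integral_sub_rpow_mul_mul_rpow_pow hα.le hμ hτ,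
    show α * k + 1 + μ = α * k + (μ + 1) by ring]
  field_simp [(hΓ k).ne']

theorem integral_sub_rpow_mul_mittagLeffler_sub_one {α μ τ : ℝ} (hα : 0 < α) (hμ : 0 < μ)
    (hτ : 0 < τ) (c : ℝ) :
    ∫ s in 0..τ, (τ - s) ^ (μ - 1) * (mittagLeffler α 1 (c * s ^ α) - 1) =
      Gamma μ * τ ^ μ * (c * τ ^ α) * mittagLeffler α (α + (μ + 1)) (c * τ ^ α) := by
  have hone (s : ℝ) : (1 : ℝ) = mittagLeffler α 1 (0 * s ^ α) := by
    simp [mittagLeffler_zero]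
  have hint (c' : ℝ) : IntervalIntegrable
      (fun s => (τ - s) ^ (μ - 1) * mittagLeffler α 1 (c' * s ^ α)) volume 0 τ :=
    (intervalIntegrable_sub_rpow (by linarith) τ 0 τ).mul_continuousOn
      ((continuous_mittagLeffler hα one_pos).comp
        (continuous_const.mul (continuous_rpow_const hα.le))).continuousOn
  simp_rw [mul_sub]
  conv_lhs => enter [1, s, 2, 2]; rw [hone s]
  rw [intervalIntegral.integral_sub (hint c) (hint 0),
    integral_sub_rpow_mul_mittagLeffler hα hμ hτ, integral_sub_rpow_mul_mittagLeffler hα hμ hτ,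
    zero_mul,
    mittagLeffler_eq_inv_Gamma_add_mul hα (by positivity) (c * τ ^ α), mittagLeffler_zero]
  ring

theorem mittagLeffler_solves_fractional_ode_general
    (α lam : ℝ) (hα : 0 < α) (hα1 : α < 1) (t : ℝ) (ht : 0 < t) :
    HasDerivAt
      (fun τ : ℝ => (1 / Real.Gamma (1 - α)) *
        ∫ s in (0:ℝ)..τ, (τ - s) ^ (-α) * (mittagLeffler α 1 (-(lam * s ^ α)) - 1))
      (-(lam * mittagLeffler α 1 (-(lam * t ^ α)))) t := by
  have hw : Continuous fun r => -(lam * mittagLeffler α 1 (-(lam * r ^ α))) :=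
    (((continuous_mittagLeffler hα one_pos).comp
      (continuous_const.mul (continuous_rpow_const hα.le)).neg).const_mul lam).neg
  refine (hw.integral_hasStrictDerivAt 0 t).hasDerivAt.congr_of_eventuallyEq ?_
  filter_upwards [lt_mem_nhds ht] with τ hτ
  have hΓ : Gamma (1 - α) ≠ 0 := (Gamma_pos_of_pos (sub_pos.mpr hα1)).ne'
  have hrhs := integral_sub_rpow_mul_mittagLeffler hα one_pos hτ (-lam)
  simp only [sub_self, rpow_zero, one_mul, Gamma_one, rpow_one, neg_mul] at hrhs
  have hlhs := integral_sub_rpow_mul_mittagLeffler_sub_one hα (sub_pos.mpr hα1) hτ (-lam)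
  rw [sub_sub_cancel_left, show α + (1 - α + 1) = 1 + 1 by ring] at hlhs
  simp only [neg_mul] at hlhs
  rw [hlhs, intervalIntegral.integral_neg, intervalIntegral.integral_const_mul, hrhs]
  have hτα : τ ^ (1 - α) * τ ^ α = τ := by rw [← rpow_add hτ, sub_add_cancel, rpow_one]
  field_simp
  linear_combination -(lam * mittagLeffler α (1 + 1) (-(lam * τ ^ α))) * hτα

/-- `w(t) = E_{α,1}(-λ t^α)` satisfies `∂_t^α (w - w(0)) + λ w = 0`, where `∂_t^α`
is the Riemann–Liouville fractional derivative. -/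
theorem mittagLeffler_solves_fractional_ode
    (α lam : ℝ) (hα : 0 < α) (hα1 : α < 1) (hlam : 0 ≤ lam) (t : ℝ) (ht : 0 < t) :
    HasDerivAt
      (fun τ : ℝ => (1 / Real.Gamma (1 - α)) *
        ∫ s in (0:ℝ)..τ, (τ - s) ^ (-α) * (mittagLeffler α 1 (-(lam * s ^ α)) - 1))
      (-(lam * mittagLeffler α 1 (-(lam * t ^ α)))) t :=
  mittagLeffler_solves_fractional_ode_general α lam hα hα1 t ht
end
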